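/- arXiv:2502.06680 — 2 statements merged into one kernel-verified Lean document; each statement's English description precedes it below -/
import Mathlib

section
/- Let W be the lazy random walk on a finite simple connected regular graph G = (V,E), s ≥ t_mix + 1, and let A_1, A_2, A_3 ⊂ ℕ be finite intervals with min(A_1) ≥ s and min(A_{i+1}) − max(A_i) ≥ s for i = 1,2. Then for every starting vertex ρ: P_ρ(R^W(A_1) ∩ R^W(A_2) ≠ ∅ and R^W(A_1) ∩ R^W(A_3) ≠ ∅) ≤ 8·(#A_1)²·#A_2·#A_3 / (#V)². -/
open Finset

variable {V : Type*} [Fintype V] [DecidableEq V] [Nonempty V]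

/-- One-step transition kernel of the lazy random walk on `G`:
stay put with probability `1/2`, otherwise move to a uniformly chosen neighbour. -/
noncomputable def lazyStep (G : SimpleGraph V) [DecidableRel G.Adj] (x y : V) : ℝ :=
  if x = y then 1 / 2 else if G.Adj x y then 1 / (2 * (G.degree x : ℝ)) else 0

/-- `n`-step transition probabilities of the lazy random walk. -/
noncomputable def lazyProb (G : SimpleGraph V) [DecidableRel G.Adj] : ℕ → V → V → ℝ
  | 0, x, y => if x = y then 1 else 0
  | n + 1, x, y => ∑ z : V, lazyStep G x z * lazyProb G n z y

/-- The stationary (degree-biased) distribution `π(x) = deg(x)/(2#E)`. -/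
noncomputable def statDist (G : SimpleGraph V) [DecidableRel G.Adj] (x : V) : ℝ :=
  (G.degree x : ℝ) / (2 * (G.edgeFinset.card : ℝ))

/-- The uniform `(ℓ∞, 1/4)` mixing time. -/
noncomputable def tmix (G : SimpleGraph V) [DecidableRel G.Adj] : ℕ :=
  sInf {n : ℕ | ∀ x y : V, |lazyProb G n x y / statDist G y - 1| ≤ 1 / 4}

/-- Extension of a finite path to all of `ℕ` (constant after time `N`). -/
def extPath (N : ℕ) (γ : Fin (N + 1) → V) : ℕ → V :=
  fun n => γ ⟨min n N, Nat.lt_succ_of_le (min_le_right n N)⟩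

/-- Weight of a finite path under the lazy random walk kernel. -/
noncomputable def pathWeight (G : SimpleGraph V) [DecidableRel G.Adj]
    (N : ℕ) (γ : Fin (N + 1) → V) : ℝ :=
  ∏ i ∈ Finset.range N, lazyStep G (extPath N γ i) (extPath N γ (i + 1))

open Classical in
/-- Probability, for the lazy random walk started at `ρ`, of a path event
depending only on the first `N+1` coordinates. -/
noncomputable def walkProb (G : SimpleGraph V) [DecidableRel G.Adj]
    (ρ : V) (N : ℕ) (E : (ℕ → V) → Prop) : ℝ :=
  ∑ γ : Fin (N + 1) → V,
    if extPath N γ 0 = ρ ∧ E (extPath N γ) then pathWeight G N γ else 0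

open Classical in
/-- Expectation, for the lazy random walk started at `ρ`, of a path functional
depending only on the first `N+1` coordinates. -/
noncomputable def walkExp (G : SimpleGraph V) [DecidableRel G.Adj]
    (ρ : V) (N : ℕ) (f : (ℕ → V) → ℝ) : ℝ :=
  ∑ γ : Fin (N + 1) → V,
    if extPath N γ 0 = ρ then pathWeight G N γ * f (extPath N γ) else 0

open Classical in
/-- Probability of a path event for the lazy random walk started from `π`. -/
noncomputable def walkProbStat (G : SimpleGraph V) [DecidableRel G.Adj]
    (N : ℕ) (E : (ℕ → V) → Prop) : ℝ :=
  ∑ γ : Fin (N + 1) → V,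
    if E (extPath N γ) then statDist G (extPath N γ 0) * pathWeight G N γ else 0

/-- Expectation of a path functional for the lazy random walk started from `π`. -/
noncomputable def walkExpStat (G : SimpleGraph V) [DecidableRel G.Adj]
    (N : ℕ) (f : (ℕ → V) → ℝ) : ℝ :=
  ∑ γ : Fin (N + 1) → V,
    statDist G (extPath N γ 0) * pathWeight G N γ * f (extPath N γ)

open Classical in
/-- Probability of a joint event for two independent lazy random walks,
each started from the stationary distribution. -/
noncomputable def twoWalkProbStat (G : SimpleGraph V) [DecidableRel G.Adj]
    (N : ℕ) (E : (ℕ → V) → (ℕ → V) → Prop) : ℝ :=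
  ∑ γ₁ : Fin (N + 1) → V, ∑ γ₂ : Fin (N + 1) → V,
    if E (extPath N γ₁) (extPath N γ₂) then
      (statDist G (extPath N γ₁ 0) * pathWeight G N γ₁) *
      (statDist G (extPath N γ₂ 0) * pathWeight G N γ₂) else 0

open Classical in
/-- Probability of a joint event for two independent lazy random walks,
both started at the vertex `ρ`. -/
noncomputable def twoWalkProbFrom (G : SimpleGraph V) [DecidableRel G.Adj]
    (ρ : V) (N : ℕ) (E : (ℕ → V) → (ℕ → V) → Prop) : ℝ :=
  ∑ γ₁ : Fin (N + 1) → V, ∑ γ₂ : Fin (N + 1) → V,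
    if extPath N γ₁ 0 = ρ ∧ extPath N γ₂ 0 = ρ ∧ E (extPath N γ₁) (extPath N γ₂) then
      pathWeight G N γ₁ * pathWeight G N γ₂ else 0

/-- Range of a path over a finite set of times. -/
def walkRange (w : ℕ → V) (A : Finset ℕ) : Finset V := A.image w

/-- `q̄^G(s)`: averaged intersection probability of two independent lazy walks
started at the same (uniform) vertex. -/
noncomputable def qbar (G : SimpleGraph V) [DecidableRel G.Adj] (s : ℕ) : ℝ :=
  (1 / (Fintype.card V : ℝ)) * ∑ ρ : V,
    twoWalkProbFrom G ρ s (fun w₁ w₂ =>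
      (walkRange w₁ (Finset.Icc 0 s) ∩ walkRange w₂ (Finset.Icc 1 s)).Nonempty)

/-- `H^W_ρ(m) = Σ_{i=0}^m Σ_{j=0}^m P_ρ(W(i+j)=ρ)`. -/
noncomputable def HW (G : SimpleGraph V) [DecidableRel G.Adj] (ρ : V) (m : ℕ) : ℝ :=
  ∑ i ∈ Finset.range (m + 1), ∑ j ∈ Finset.range (m + 1), lazyProb G (i + j) ρ ρ

/-!
Both intersections are witnessed by two coincidences `W i = W j` and `W i' = W k` with
`i, i' ∈ A₁`, `j ∈ A₂`, `k ∈ A₃`, so a union bound over such quadruples leaves one pair of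
coincidences to estimate. Conditionally on the path up to time `i`, the walk has to be back at
`W i` after `j - i ≥ t_mix` steps, and conditionally on the path up to time `j`, it has to be at
`W i'` after `k - j ≥ t_mix` steps. Beyond the mixing time every transition probability is at
most `(1 + 1/4) π(y) = 5 / (4 #V)`, so each quadruple costs at most `(5 / (4 #V))² ≤ 8 / #V²`.

That the mixing time is attained at all is Doeblin's argument: on a connected graph the lazy
walk charges every vertex after `#V` steps, which contracts the oscillation of the columns of
its `n`-step kernel `Pⁿ` geometrically; on a regular graph the kernel is symmetric, hence doubly
stochastic, so `Pⁿ` converges to the uniform distribution, which is `π`.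
-/

section LazyWalk

variable {V : Type*} [Fintype V] [DecidableEq V] (G : SimpleGraph V) [DecidableRel G.Adj]

lemma lazyStep_nonneg (x y : V) : 0 ≤ lazyStep G x y := by
  unfold lazyStep
  split_ifs <;> positivity

lemma lazyStep_symm {d : ℕ} (hreg : G.IsRegularOfDegree d) (x y : V) :
    lazyStep G x y = lazyStep G y x := by
  simp only [lazyStep, hreg x, hreg y, eq_comm (a := x), G.adj_comm x y]

lemma sum_lazyStep (hdeg : ∀ x, 0 < G.degree x) (x : V) : ∑ y, lazyStep G x y = 1 := by
  have hsplit : ∀ y, lazyStep G x y = (if x = y then 1 / 2 else 0) +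
      if G.Adj x y then 1 / (2 * (G.degree x : ℝ)) else 0 := by
    intro y
    unfold lazyStep
    split_ifs with hxy hadj <;> simp_all
  have hdx : (G.degree x : ℝ) ≠ 0 := by exact_mod_cast (hdeg x).ne'
  simp only [hsplit, sum_add_distrib, sum_ite_eq, mem_univ, if_true, ← sum_filter,
    ← G.neighborFinset_eq_filter, sum_const, G.card_neighborFinset_eq_degree, nsmul_eq_mul]
  field_simp
  norm_num

lemma lazyProb_nonneg (n : ℕ) (x y : V) : 0 ≤ lazyProb G n x y := by
  induction n generalizing x with
  | zero => unfold lazyProb; positivity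
  | succ n ih => exact sum_nonneg fun z _ => mul_nonneg (lazyStep_nonneg G x z) (ih z)

lemma sum_lazyProb (hdeg : ∀ x, 0 < G.degree x) (n : ℕ) (x : V) :
    ∑ y, lazyProb G n x y = 1 := by
  induction n generalizing x with
  | zero => simp [lazyProb]
  | succ n ih => simp only [lazyProb, sum_comm (γ := V), ← mul_sum, ih, mul_one,
      sum_lazyStep G hdeg]

lemma lazyProb_add (m n : ℕ) (x y : V) :
    lazyProb G (m + n) x y = ∑ z, lazyProb G m x z * lazyProb G n z y := by
  induction m generalizing x with
  | zero => simp [lazyProb, ite_mul]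
  | succ m ih =>
    rw [Nat.add_right_comm]
    simp only [lazyProb, ih, mul_sum, sum_mul, mul_assoc]
    exact sum_comm

lemma lazyProb_succ' (n : ℕ) (x y : V) :
    lazyProb G (n + 1) x y = ∑ z, lazyProb G n x z * lazyStep G z y := by
  rw [lazyProb_add]
  simp [lazyProb]

lemma lazyProb_symm {d : ℕ} (hreg : G.IsRegularOfDegree d) (n : ℕ) (x y : V) :
    lazyProb G n x y = lazyProb G n y x := by
  induction n generalizing x y with
  | zero => simp [lazyProb, eq_comm]
  | succ n ih =>
    rw [lazyProb, lazyProb_succ']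
    exact sum_congr rfl fun z _ => by rw [ih, lazyStep_symm G hreg, mul_comm]

lemma lazyProb_le_of_forall_le {m n : ℕ} (hmn : m ≤ n) {B : ℝ}
    (hdeg : ∀ x, 0 < G.degree x) (hB : ∀ x y, lazyProb G m x y ≤ B) (x y : V) :
    lazyProb G n x y ≤ B := by
  induction n, hmn using Nat.le_induction generalizing x with
  | base => exact hB x y
  | succ n _ ih =>
    calc lazyProb G (n + 1) x y = ∑ z, lazyStep G x z * lazyProb G n z y := rfl
      _ ≤ ∑ z, lazyStep G x z * B :=
        sum_le_sum fun z _ => mul_le_mul_of_nonneg_left (ih z) (lazyStep_nonneg G x z)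
      _ = B := by rw [← sum_mul, sum_lazyStep G hdeg, one_mul]

end LazyWalk

lemma sum_sub_mul_le {ι : Type*} [Fintype ι] {μ ν f : ι → ℝ} {ε a D : ℝ}
    (hμ : ∑ i, μ i = 1) (hν : ∑ i, ν i = 1) (hμε : ∀ i, ε ≤ μ i) (hνε : ∀ i, ε ≤ ν i)
    (hfa : ∀ i, a ≤ f i) (hfD : ∀ i, f i ≤ a + D) :
    ∑ i, (μ i - ν i) * f i ≤ (1 - Fintype.card ι * ε) * D := by
  have hshift : ∑ i, (μ i - ν i) * f i = ∑ i, (μ i - ν i) * (f i - a) := by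
    simp only [mul_sub, sum_sub_distrib, ← sum_mul, hμ, hν, sub_self, zero_mul, sub_zero]
  have hterm : ∀ i, (μ i - ν i) * (f i - a) ≤ (μ i - ε) * D := by
    intro i
    rcases le_total (μ i) (ν i) with h | h
    · nlinarith [hfa i, hfD i, hμε i]
    · nlinarith [hfa i, hfD i, hνε i]
  calc ∑ i, (μ i - ν i) * f i ≤ ∑ i, (μ i - ε) * D := hshift ▸ sum_le_sum fun i _ => hterm i
    _ = (1 - Fintype.card ι * ε) * D := by
      rw [← sum_mul, sum_sub_distrib, hμ, sum_const, card_univ, nsmul_eq_mul]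

section Mixing

variable {V : Type*} [Fintype V] {G : SimpleGraph V} [DecidableRel G.Adj]

lemma statDist_eq_inv_card {d : ℕ} (hreg : G.IsRegularOfDegree d)
    (hdeg : ∀ x, 0 < G.degree x) (x : V) : statDist G x = (Fintype.card V : ℝ)⁻¹ := by
  have hedges : 2 * #G.edgeFinset = Fintype.card V * d := by
    rw [← G.sum_degrees_eq_twice_card_edges]
    simp [hreg _, mul_comm]
  have hd : (0 : ℝ) < d := by exact_mod_cast hreg x ▸ hdeg x
  unfold statDist
  rw [hreg x, ← Nat.cast_ofNat, ← Nat.cast_mul, hedges]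
  push_cast
  field_simp

variable [DecidableEq V]

lemma lazyProb_pos_of_walk (hdeg : ∀ x, 0 < G.degree x) {x y : V} (p : G.Walk x y) :
    0 < lazyProb G p.length x y := by
  induction p with
  | nil => simp [lazyProb]
  | @cons x z y hxz p ih =>
    have hstep : 0 < lazyStep G x z := by
      have : (0 : ℝ) < G.degree x := by exact_mod_cast hdeg x
      simp only [lazyStep, G.ne_of_adj hxz, hxz, if_true, if_false]
      positivity
    calc 0 < lazyStep G x z * lazyProb G p.length z y := mul_pos hstep ih
      _ ≤ ∑ w, lazyStep G x w * lazyProb G p.length w y :=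
        single_le_sum (fun w _ => mul_nonneg (lazyStep_nonneg G x w)
          (lazyProb_nonneg G _ w y)) (mem_univ z)

lemma lazyProb_pos_of_le {m n : ℕ} (hmn : m ≤ n) {x y : V} (h : 0 < lazyProb G m x y) :
    0 < lazyProb G n x y := by
  induction n, hmn using Nat.le_induction with
  | base => exact h
  | succ n _ ih =>
    calc 0 < lazyStep G x x * lazyProb G n x y := by simp only [lazyStep, if_true]; positivity
      _ ≤ ∑ w, lazyStep G x w * lazyProb G n w y :=
        single_le_sum (fun w _ => mul_nonneg (lazyStep_nonneg G x w)
          (lazyProb_nonneg G _ w y)) (mem_univ x)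

lemma exists_pos_le_lazyProb (hconn : G.Connected) (hdeg : ∀ x, 0 < G.degree x) :
    ∃ ε > 0, ∀ x y, ε ≤ lazyProb G (Fintype.card V) x y := by
  have hpos : ∀ x y, 0 < lazyProb G (Fintype.card V) x y := by
    intro x y
    obtain ⟨p, hp, -⟩ := hconn.exists_path_of_dist x y
    exact lazyProb_pos_of_le hp.length_lt.le (lazyProb_pos_of_walk hdeg p)
  have : Nonempty V := hconn.nonempty
  obtain ⟨q, -, hq⟩ :=
    exists_min_image univ (fun q : V × V => lazyProb G (Fintype.card V) q.1 q.2) univ_nonempty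
  exact ⟨_, hpos q.1 q.2, fun x y => hq (x, y) (mem_univ _)⟩

lemma lazyProb_sub_le_pow (hdeg : ∀ x, 0 < G.degree x) {M : ℕ} {ε : ℝ}
    (hM : ∀ x y, ε ≤ lazyProb G M x y) (k : ℕ) (x x' y : V) :
    lazyProb G (M * k) x y - lazyProb G (M * k) x' y ≤ (1 - Fintype.card V * ε) ^ k := by
  induction k generalizing x x' with
  | zero => simp only [lazyProb, mul_zero, pow_zero]; split_ifs <;> norm_num
  | succ k ih =>
    obtain ⟨z₀, -, hz₀⟩ := exists_min_image univ (fun z => lazyProb G (M * k) z y)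
      ⟨x, mem_univ x⟩
    rw [mul_add_one, add_comm, lazyProb_add, lazyProb_add, ← sum_sub_distrib, pow_succ',
      ← sum_congr rfl fun z _ => sub_mul (lazyProb G M x z) (lazyProb G M x' z) _]
    exact sum_sub_mul_le (sum_lazyProb G hdeg M x) (sum_lazyProb G hdeg M x') (hM x) (hM x')
      (fun z => hz₀ z (mem_univ z)) fun z => by linarith [ih z z₀]

lemma abs_lazyProb_sub_inv_card_le {d : ℕ} (hreg : G.IsRegularOfDegree d)
    (hdeg : ∀ x, 0 < G.degree x) {M : ℕ} {ε : ℝ} (hM : ∀ x y, ε ≤ lazyProb G M x y)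
    (k : ℕ) (x y : V) :
    |Fintype.card V * lazyProb G (M * k) x y - 1| ≤
      Fintype.card V * (1 - Fintype.card V * ε) ^ k := by
  have hcol : ∑ x', lazyProb G (M * k) x' y = 1 := by
    simp only [lazyProb_symm G hreg _ _ y, sum_lazyProb G hdeg]
  have hrepr : Fintype.card V * lazyProb G (M * k) x y - 1
      = ∑ x', (lazyProb G (M * k) x y - lazyProb G (M * k) x' y) := by
    rw [sum_sub_distrib, hcol, sum_const, card_univ, nsmul_eq_mul]
  rw [hrepr, abs_le]
  constructor
  · have := sum_le_sum fun x' (_ : x' ∈ univ) => lazyProb_sub_le_pow hdeg hM k x' x y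
    simp only [sum_sub_distrib, sum_const, card_univ, nsmul_eq_mul] at this ⊢
    linarith
  · simpa [sum_const, card_univ, nsmul_eq_mul] using
      sum_le_sum fun x' (_ : x' ∈ univ) => lazyProb_sub_le_pow hdeg hM k x x' y

lemma exists_lazyProb_div_statDist_near_one (hconn : G.Connected) {d : ℕ}
    (hreg : G.IsRegularOfDegree d) (hdeg : ∀ x, 0 < G.degree x) :
    ∃ n, ∀ x y : V, |lazyProb G n x y / statDist G y - 1| ≤ 1 / 4 := by
  obtain ⟨ε, hε, hM⟩ := exists_pos_le_lazyProb hconn hdeg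
  have : Nonempty V := hconn.nonempty
  have hcard : (0 : ℝ) < Fintype.card V := by exact_mod_cast Fintype.card_pos
  obtain ⟨k, hk⟩ := exists_pow_lt_of_lt_one (show (0 : ℝ) < 1 / (4 * Fintype.card V) by
    positivity) (show 1 - Fintype.card V * ε < 1 by nlinarith)
  refine ⟨Fintype.card V * k, fun x y => ?_⟩
  rw [statDist_eq_inv_card hreg hdeg, div_inv_eq_mul, mul_comm]
  calc _ ≤ Fintype.card V * (1 - Fintype.card V * ε) ^ k :=
        abs_lazyProb_sub_inv_card_le hreg hdeg hM k x y
    _ ≤ Fintype.card V * (1 / (4 * Fintype.card V)) := by gcongr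
    _ = 1 / 4 := by field_simp

lemma lazyProb_le_of_tmix_le (hconn : G.Connected) {d : ℕ} (hreg : G.IsRegularOfDegree d)
    (hdeg : ∀ x, 0 < G.degree x) {n : ℕ} (hn : tmix G ≤ n) (x y : V) :
    lazyProb G n x y ≤ 5 / (4 * Fintype.card V) := by
  refine lazyProb_le_of_forall_le G hn hdeg (fun x y => ?_) x y
  have hmix : |lazyProb G (tmix G) x y / statDist G y - 1| ≤ 1 / 4 :=
    Nat.sInf_mem (exists_lazyProb_div_statDist_near_one hconn hreg hdeg) x y
  have : Nonempty V := hconn.nonempty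
  have hcard : (0 : ℝ) < Fintype.card V := by exact_mod_cast Fintype.card_pos
  rw [statDist_eq_inv_card hreg hdeg, div_inv_eq_mul] at hmix
  rw [le_div_iff₀ (by positivity)]
  linarith [(abs_le.mp hmix).2]

end Mixing

section PathSpace

variable {V : Type*}

lemma extPath_snoc_of_le {N : ℕ} (γ : Fin (N + 1) → V) (v : V) {i : ℕ} (hi : i ≤ N) :
    extPath (N + 1) (Fin.snoc γ v) i = extPath N γ i := by
  simp [extPath, Fin.snoc, min_eq_left hi, min_eq_left (hi.trans N.le_succ), Nat.lt_succ_of_le hi]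

lemma extPath_snoc_self {N : ℕ} (γ : Fin (N + 1) → V) (v : V) :
    extPath (N + 1) (Fin.snoc γ v) (N + 1) = v := by
  simp [extPath, Fin.snoc]

lemma DependsOn.extPath_snoc {E : (ℕ → V) → Prop} {N : ℕ}
    (hE : DependsOn E (Set.Iic N)) (γ : Fin (N + 1) → V) (v : V) :
    E (extPath (N + 1) (Fin.snoc γ v)) = E (extPath N γ) :=
  hE fun _ hi => extPath_snoc_of_le γ v hi

lemma DependsOn.and_apply_eq {E : (ℕ → V) → Prop} {m i : ℕ}
    (hE : DependsOn E (Set.Iic m)) (hi : i ≤ m) (v : V) :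
    DependsOn (fun w => E w ∧ w i = v) (Set.Iic m) :=
  fun x y h => by dsimp only; rw [hE h, h i hi]

variable [Fintype V]

lemma sum_pi_fin_succ_eq_sum_snoc {M : Type*} [AddCommMonoid M] {N : ℕ}
    (f : (Fin (N + 1 + 1) → V) → M) :
    ∑ γ, f γ = ∑ γ : Fin (N + 1) → V, ∑ v, f (Fin.snoc γ v) := by
  rw [← (Fin.snocEquiv fun _ => V).sum_comp, Fintype.sum_prod_type, sum_comm]
  rfl

variable [DecidableEq V] (G : SimpleGraph V) [DecidableRel G.Adj]

lemma pathWeight_snoc {N : ℕ} (γ : Fin (N + 1) → V) (v : V) :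
    pathWeight G (N + 1) (Fin.snoc γ v) = pathWeight G N γ * lazyStep G (extPath N γ N) v := by
  unfold pathWeight
  rw [prod_range_succ, extPath_snoc_of_le γ v le_rfl, extPath_snoc_self]
  congr 1
  refine prod_congr rfl fun i hi => ?_
  rw [mem_range] at hi
  rw [extPath_snoc_of_le γ v hi.le, extPath_snoc_of_le γ v hi]

lemma pathWeight_nonneg {N : ℕ} (γ : Fin (N + 1) → V) : 0 ≤ pathWeight G N γ :=
  prod_nonneg fun _ _ => lazyStep_nonneg G _ _

variable {G} (ρ : V)

lemma walkProb_congr {N : ℕ} {E F : (ℕ → V) → Prop} (h : ∀ w, E w ↔ F w) :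
    walkProb G ρ N E = walkProb G ρ N F :=
  congrArg _ (funext fun w => propext (h w))

lemma walkProb_nonneg (N : ℕ) (E : (ℕ → V) → Prop) : 0 ≤ walkProb G ρ N E :=
  sum_nonneg fun γ _ => by have := pathWeight_nonneg G γ; split_ifs <;> positivity

lemma walkProb_le_sum {ι : Type*} (N : ℕ) (E : (ℕ → V) → Prop) (S : Finset ι)
    (F : ι → (ℕ → V) → Prop) (h : ∀ w, E w → ∃ i ∈ S, F i w) :
    walkProb G ρ N E ≤ ∑ i ∈ S, walkProb G ρ N (F i) := by
  unfold walkProb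
  rw [sum_comm]
  refine sum_le_sum fun γ _ => ?_
  have hw := pathWeight_nonneg G γ
  split_ifs with hE
  · obtain ⟨i, hi, hF⟩ := h _ hE.2
    exact single_le_sum (fun j _ => by positivity) hi |>.trans' (by simp [hE.1, hF])
  · exact sum_nonneg fun j _ => by split_ifs <;> positivity

open Classical in
lemma walkProb_eq_sum_and_eq (N t : ℕ) (E : (ℕ → V) → Prop) :
    walkProb G ρ N E = ∑ v, walkProb G ρ N (fun w => E w ∧ w t = v) := by
  unfold walkProb
  rw [sum_comm]
  refine sum_congr rfl fun γ _ => ?_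
  simp only [← and_assoc]
  by_cases h : extPath N γ 0 = ρ ∧ E (extPath N γ) <;> simp [h]

open Classical in
lemma walkProb_succ (N : ℕ) (E : (ℕ → V) → Prop) :
    walkProb G ρ (N + 1) E = ∑ γ : Fin (N + 1) → V, ∑ v,
      if extPath N γ 0 = ρ ∧ E (extPath (N + 1) (Fin.snoc γ v))
      then pathWeight G N γ * lazyStep G (extPath N γ N) v else 0 := by
  unfold walkProb
  rw [sum_pi_fin_succ_eq_sum_snoc]
  simp only [extPath_snoc_of_le _ _ (Nat.zero_le _), pathWeight_snoc]

open Classical in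
lemma walkProb_of_dependsOn (hdeg : ∀ x, 0 < G.degree x) {E : (ℕ → V) → Prop} {M N : ℕ}
    (hE : DependsOn E (Set.Iic M)) (hMN : M ≤ N) : walkProb G ρ N E = walkProb G ρ M E := by
  induction N, hMN using Nat.le_induction with
  | base => rfl
  | succ N hMN ih =>
    rw [← ih, walkProb_succ]
    refine sum_congr rfl fun γ _ => ?_
    simp only [(hE.mono (Set.Iic_subset_Iic.mpr hMN)).extPath_snoc]
    split_ifs <;> simp [← mul_sum, sum_lazyStep G hdeg]

lemma walkProb_true (hdeg : ∀ x, 0 < G.degree x) (N : ℕ) : walkProb G ρ N (fun _ => True) = 1 := by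
  rw [walkProb_of_dependsOn ρ hdeg (fun _ _ _ => rfl) (Nat.zero_le N), walkProb,
    ← (Equiv.funUnique (Fin 1) V).symm.sum_comp]
  simp [extPath, pathWeight]

open Classical in
lemma walkProb_succ_and_eq {E : (ℕ → V) → Prop} {N : ℕ} (hE : DependsOn E (Set.Iic N)) (v : V) :
    walkProb G ρ (N + 1) (fun w => E w ∧ w (N + 1) = v) =
      ∑ z, walkProb G ρ N (fun w => E w ∧ w N = z) * lazyStep G z v := by
  rw [walkProb_succ]
  simp only [hE.extPath_snoc, extPath_snoc_self]
  unfold walkProb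
  simp only [sum_mul]
  conv_rhs => rw [sum_comm]
  refine sum_congr rfl fun γ _ => ?_
  simp only [← and_assoc]
  by_cases h : extPath N γ 0 = ρ ∧ E (extPath N γ) <;> simp [h]

lemma walkProb_and_eq {E : (ℕ → V) → Prop} {m t : ℕ}
    (hE : DependsOn E (Set.Iic m)) (hmt : m ≤ t) (v : V) :
    walkProb G ρ t (fun w => E w ∧ w t = v) =
      ∑ z, walkProb G ρ m (fun w => E w ∧ w m = z) * lazyProb G (t - m) z v := by
  induction t, hmt using Nat.le_induction generalizing v with
  | base => simp [lazyProb]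
  | succ t hmt ih =>
    rw [walkProb_succ_and_eq ρ (hE.mono (Set.Iic_subset_Iic.mpr hmt)), Nat.sub_add_comm hmt]
    simp only [ih, lazyProb_succ', sum_mul, mul_sum, mul_assoc]
    exact sum_comm

lemma walkProb_and_eq_le (hdeg : ∀ x, 0 < G.degree x) {E : (ℕ → V) → Prop} {m t N : ℕ}
    (hE : DependsOn E (Set.Iic m)) (hmt : m ≤ t) (htN : t ≤ N) {v : V} {B : ℝ}
    (hB : ∀ z, lazyProb G (t - m) z v ≤ B) :
    walkProb G ρ N (fun w => E w ∧ w t = v) ≤ B * walkProb G ρ N E := by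
  have hEt : DependsOn (fun w => E w ∧ w t = v) (Set.Iic t) :=
    (hE.mono (Set.Iic_subset_Iic.mpr hmt)).and_apply_eq le_rfl v
  calc walkProb G ρ N (fun w => E w ∧ w t = v)
      = ∑ z, walkProb G ρ m (fun w => E w ∧ w m = z) * lazyProb G (t - m) z v := by
        rw [walkProb_of_dependsOn ρ hdeg hEt htN, walkProb_and_eq ρ hE hmt]
    _ ≤ ∑ z, walkProb G ρ m (fun w => E w ∧ w m = z) * B :=
        sum_le_sum fun z _ => mul_le_mul_of_nonneg_left (hB z) (walkProb_nonneg ρ m _)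
    _ = B * walkProb G ρ N E := by
        rw [← sum_mul, ← walkProb_eq_sum_and_eq, mul_comm,
          walkProb_of_dependsOn ρ hdeg hE (hmt.trans htN)]

lemma walkProb_and_eq_apply_le (hdeg : ∀ x, 0 < G.degree x) {E : (ℕ → V) → Prop}
    {i m t N : ℕ} (hE : DependsOn E (Set.Iic m)) (him : i ≤ m) (hmt : m ≤ t) (htN : t ≤ N)
    {B : ℝ} (hB : ∀ z v, lazyProb G (t - m) z v ≤ B) :
    walkProb G ρ N (fun w => E w ∧ w t = w i) ≤ B * walkProb G ρ N E := by
  calc walkProb G ρ N (fun w => E w ∧ w t = w i)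
      = ∑ v, walkProb G ρ N (fun w => (E w ∧ w i = v) ∧ w t = v) := by
        rw [walkProb_eq_sum_and_eq ρ N i]
        exact sum_congr rfl fun v _ => walkProb_congr ρ fun w => by grind
    _ ≤ ∑ v, B * walkProb G ρ N (fun w => E w ∧ w i = v) :=
        sum_le_sum fun v _ => walkProb_and_eq_le ρ hdeg (hE.and_apply_eq him v) hmt htN (hB · v)
    _ = B * walkProb G ρ N E := by rw [← mul_sum, ← walkProb_eq_sum_and_eq]

lemma walkProb_two_returns_le (hconn : G.Connected) {d : ℕ} (hreg : G.IsRegularOfDegree d)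
    (hdeg : ∀ x, 0 < G.degree x) {i i' j k N : ℕ} (hij : i + tmix G ≤ j) (hi'j : i' ≤ j)
    (hjk : j + tmix G ≤ k) (hkN : k ≤ N) :
    walkProb G ρ N (fun w => w i = w j ∧ w i' = w k) ≤ (5 / (4 * Fintype.card V)) ^ 2 := by
  have hB {n : ℕ} (hn : tmix G ≤ n) := lazyProb_le_of_tmix_le hconn hreg hdeg hn
  have hreturn : walkProb G ρ N (fun w => w j = w i) ≤ 5 / (4 * Fintype.card V) := by
    simpa [walkProb_true ρ hdeg] using walkProb_and_eq_apply_le ρ hdeg (E := fun _ => True)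
      (fun _ _ _ => rfl) le_rfl (by omega) (by omega) (hB (by omega))
  have hE : DependsOn (fun w : ℕ → V => w j = w i) (Set.Iic j) := fun x y h => by
    dsimp only
    rw [h j (Set.mem_Iic.mpr le_rfl), h i (by simp only [Set.mem_Iic]; omega)]
  calc walkProb G ρ N (fun w => w i = w j ∧ w i' = w k)
      = walkProb G ρ N (fun w => w j = w i ∧ w k = w i') :=
        walkProb_congr ρ fun w => by rw [eq_comm (a := w i), eq_comm (a := w i')]
    _ ≤ 5 / (4 * Fintype.card V) * walkProb G ρ N (fun w => w j = w i) :=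
        walkProb_and_eq_apply_le ρ hdeg hE hi'j (by omega) hkN (hB (by omega))
    _ ≤ (5 / (4 * Fintype.card V)) ^ 2 := by rw [sq]; gcongr

end PathSpace

lemma walkRange_inter_nonempty_iff {V : Type*} [DecidableEq V] (w : ℕ → V) (A B : Finset ℕ) :
    (walkRange w A ∩ walkRange w B).Nonempty ↔ ∃ i ∈ A, ∃ j ∈ B, w i = w j := by
  simp only [walkRange, Finset.Nonempty, mem_inter, mem_image]
  constructor
  · rintro ⟨_, ⟨i, hi, rfl⟩, j, hj, hji⟩
    exact ⟨i, hi, j, hj, hji.symm⟩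
  · rintro ⟨i, hi, j, hj, hij⟩
    exact ⟨w i, ⟨i, hi, rfl⟩, j, hj, hij.symm⟩

theorem range_self_intersection_three_intervals_general
    (G : SimpleGraph V) [DecidableRel G.Adj] (hconn : G.Connected)
    (hcard : 2 ≤ Fintype.card V) (d : ℕ) (hreg : G.IsRegularOfDegree d)
    (s : ℕ) (hs : tmix G + 1 ≤ s)
    (a₁ b₁ a₂ b₂ a₃ b₃ : ℕ)
    (hsep₁ : b₁ + s ≤ a₂) (hsep₂ : b₂ + s ≤ a₃) (ρ : V) :
    walkProb G ρ b₃ (fun w =>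
        (walkRange w (Finset.Icc a₁ b₁) ∩ walkRange w (Finset.Icc a₂ b₂)).Nonempty ∧
        (walkRange w (Finset.Icc a₁ b₁) ∩ walkRange w (Finset.Icc a₃ b₃)).Nonempty) ≤
      8 * ((Finset.Icc a₁ b₁).card : ℝ) ^ 2 * ((Finset.Icc a₂ b₂).card : ℝ) *
        ((Finset.Icc a₃ b₃).card : ℝ) / ((Fintype.card V : ℝ)) ^ 2 := by
  have : Nontrivial V := Fintype.one_lt_card_iff_nontrivial.mp hcard
  have hdeg : ∀ x, 0 < G.degree x := fun x => hconn.preconnected.degree_pos_of_nontrivial x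
  calc _ ≤ ∑ q ∈ (Icc a₁ b₁ ×ˢ Icc a₁ b₁) ×ˢ (Icc a₂ b₂ ×ˢ Icc a₃ b₃),
          walkProb G ρ b₃ (fun w => w q.1.1 = w q.2.1 ∧ w q.1.2 = w q.2.2) := by
        refine walkProb_le_sum ρ b₃ _ _ _ fun w ⟨h₂, h₃⟩ => ?_
        obtain ⟨i, hi, j, hj, hij⟩ := (walkRange_inter_nonempty_iff w _ _).mp h₂
        obtain ⟨i', hi', k, hk, hi'k⟩ := (walkRange_inter_nonempty_iff w _ _).mp h₃
        exact ⟨((i, i'), (j, k)), by simp_all, hij, hi'k⟩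
    _ ≤ ∑ _q ∈ (Icc a₁ b₁ ×ˢ Icc a₁ b₁) ×ˢ (Icc a₂ b₂ ×ˢ Icc a₃ b₃),
          (5 / (4 * Fintype.card V) : ℝ) ^ 2 := sum_le_sum fun q hq => by
        simp only [mem_product, mem_Icc] at hq
        exact walkProb_two_returns_le ρ hconn hreg hdeg (by omega) (by omega) (by omega) (by omega)
    _ ≤ _ := by
        rw [sum_const, card_product, card_product, card_product, nsmul_eq_mul]
        push_cast
        have hX : (0 : ℝ) ≤ #(Icc a₁ b₁) ^ 2 * #(Icc a₂ b₂) * #(Icc a₃ b₃) := by positivity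
        field_simp
        nlinarith

/-- Range self-intersection probability, three intervals. -/
theorem range_self_intersection_three_intervals
    (G : SimpleGraph V) [DecidableRel G.Adj] (hconn : G.Connected)
    (hcard : 2 ≤ Fintype.card V) (d : ℕ) (hreg : G.IsRegularOfDegree d)
    (s : ℕ) (hs : tmix G + 1 ≤ s)
    (a₁ b₁ a₂ b₂ a₃ b₃ : ℕ) (h₁ : a₁ ≤ b₁) (h₂ : a₂ ≤ b₂) (h₃ : a₃ ≤ b₃)
    (ha₁ : s ≤ a₁) (hsep₁ : b₁ + s ≤ a₂) (hsep₂ : b₂ + s ≤ a₃) (ρ : V) :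
    walkProb G ρ b₃ (fun w =>
        (walkRange w (Finset.Icc a₁ b₁) ∩ walkRange w (Finset.Icc a₂ b₂)).Nonempty ∧
        (walkRange w (Finset.Icc a₁ b₁) ∩ walkRange w (Finset.Icc a₃ b₃)).Nonempty) ≤
      8 * ((Finset.Icc a₁ b₁).card : ℝ) ^ 2 * ((Finset.Icc a₂ b₂).card : ℝ) *
        ((Finset.Icc a₃ b₃).card : ℝ) / ((Fintype.card V : ℝ)) ^ 2 :=
  range_self_intersection_three_intervals_general G hconn hcard d hreg s hs a₁ b₁ a₂ b₂ a₃ b₃ hsep₁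
    hsep₂ ρ
end

section
/- Let W be the lazy random walk on a finite simple connected regular graph G = (V,E), and define H^W_ρ(m) = Σ_{i=0}^{m} Σ_{j=0}^{m} P_ρ(W(i+j) = ρ). If m ≥ t_mix + 1, then H^W_ρ(m) ≤ sup_{ρ'∈V} H^{W}_{ρ'}(t_mix) + (5/2)·m²/#V. -/
open Finset

variable {V : Type*} [Fintype V] [DecidableEq V] [Nonempty V]

/-! After the mixing time every return probability is at most `(5/4)/#V`, so of the `(m+1)²`
terms of `H^W_ρ(m)` those with `i, j ≤ t_mix` sum to at most `sup H^W_{ρ'}(t_mix)` and the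
remaining `(m+1)² - (t_mix+1)² ≤ 2m²` terms (using `t_mix ≥ 1`) add at most `(5/2) m²/#V`.

The substance is that `t_mix` really is a mixing time. On a regular graph the lazy walk matrix
`P` is doubly stochastic, so the uniform distribution is stationary, and by connectedness and
laziness all entries of `P ^ #V` are positive, say at least `δ`. Writing
`(A * B) i j - 1/#V = ∑ k, (A i k - δ) * (B k j - 1/#V)` shows (Doeblin) that multiplying by
`P ^ #V` shrinks the sup-distance of `P ^ n` to the uniform matrix by the factor `1 - #V δ < 1`,
and multiplying by `P` (the case `δ = 0`) never increases it. -/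

open Matrix

namespace Matrix

variable {ι : Type*} [Fintype ι] [DecidableEq ι]

theorem abs_mul_apply_sub_inv_card_le {A B : Matrix ι ι ℝ} {δ w : ℝ}
    (hA : A ∈ rowStochastic ℝ ι) (hδ : ∀ i j, δ ≤ A i j) (hB : B ∈ colStochastic ℝ ι)
    (hw : ∀ i j, |B i j - (Fintype.card ι : ℝ)⁻¹| ≤ w) (i j : ι) :
    |(A * B) i j - (Fintype.card ι : ℝ)⁻¹| ≤ (1 - Fintype.card ι * δ) * w := by
  have : Nonempty ι := ⟨i⟩
  set c : ℝ := (Fintype.card ι : ℝ)⁻¹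
  have hc : (Fintype.card ι : ℝ) * c = 1 := mul_inv_cancel₀ (by positivity)
  have hrow : ∑ k, (A i k - δ) = 1 - Fintype.card ι * δ := by
    simp [sum_sub_distrib, sum_row_of_mem_rowStochastic hA]
  -- The row sums of `A` absorb `c`, and the column sums of `B` make `∑ k, δ * (B k j - c)` vanish.
  have key : (A * B) i j - c = ∑ k, (A i k - δ) * (B k j - c) := by
    simp only [mul_apply, sub_mul, mul_sub, sum_sub_distrib, ← sum_mul, ← mul_sum,
      sum_row_of_mem_rowStochastic hA, sum_col_of_mem_colStochastic hB, sum_const, card_univ,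
      nsmul_eq_mul]
    linear_combination (-δ) * hc
  rw [key]
  calc |∑ k, (A i k - δ) * (B k j - c)| ≤ ∑ k, (A i k - δ) * w := by
        refine (abs_sum_le_sum_abs _ _).trans (sum_le_sum fun k _ => ?_)
        rw [abs_mul, abs_of_nonneg (sub_nonneg.2 (hδ i k))]
        exact mul_le_mul_of_nonneg_left (hw k j) (sub_nonneg.2 (hδ i k))
    _ = (1 - Fintype.card ι * δ) * w := by rw [← sum_mul, hrow]

theorem abs_pow_apply_sub_inv_card_le_of_le {P : Matrix ι ι ℝ}
    (hP : P ∈ doublyStochastic ℝ ι) {k l : ℕ} {ε : ℝ}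
    (hk : ∀ i j, |(P ^ k) i j - (Fintype.card ι : ℝ)⁻¹| ≤ ε) (hkl : k ≤ l) (i j : ι) :
    |(P ^ l) i j - (Fintype.card ι : ℝ)⁻¹| ≤ ε := by
  induction l, hkl using Nat.le_induction generalizing i j with
  | base => exact hk i j
  | succ l _ ih =>
    have hPl : P ^ l ∈ doublyStochastic ℝ ι := pow_mem hP l
    rw [pow_succ']
    simpa using abs_mul_apply_sub_inv_card_le
      (mem_doublyStochastic_iff_mem_rowStochastic_and_mem_colStochastic.1 hP).1
      (fun _ _ => nonneg_of_mem_doublyStochastic hP)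
      (mem_doublyStochastic_iff_mem_rowStochastic_and_mem_colStochastic.1 hPl).2 ih i j

theorem abs_one_apply_sub_inv_card_le [Nonempty ι] (i j : ι) :
    |(1 : Matrix ι ι ℝ) i j - (Fintype.card ι : ℝ)⁻¹| ≤ 1 := by
  have hc₀ : 0 ≤ (Fintype.card ι : ℝ)⁻¹ := by positivity
  have hc₁ : (Fintype.card ι : ℝ)⁻¹ ≤ 1 :=
    inv_le_one_of_one_le₀ (Nat.one_le_cast.2 Fintype.card_pos)
  rw [one_apply, abs_sub_le_iff]
  split_ifs <;> constructor <;> linarith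

theorem exists_pow_abs_apply_sub_inv_card_le {P : Matrix ι ι ℝ}
    (hP : P ∈ doublyStochastic ℝ ι) {n₀ : ℕ} (hpos : ∀ i j, 0 < (P ^ n₀) i j) {ε : ℝ}
    (hε : 0 < ε) : ∃ n, ∀ i j, |(P ^ n) i j - (Fintype.card ι : ℝ)⁻¹| ≤ ε := by
  cases isEmpty_or_nonempty ι
  · exact ⟨0, fun i => isEmptyElim i⟩
  set Q := P ^ n₀
  have hQ : Q ∈ doublyStochastic ℝ ι := pow_mem hP n₀
  obtain ⟨⟨i₀, j₀⟩, -, hmin⟩ :=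
    exists_min_image univ (fun p : ι × ι => Q p.1 p.2) univ_nonempty
  set δ := Q i₀ j₀
  have hδ : ∀ i j, δ ≤ Q i j := fun i j => hmin (i, j) (mem_univ _)
  have hcontract :
      ∀ k i j, |(Q ^ k) i j - (Fintype.card ι : ℝ)⁻¹| ≤ (1 - Fintype.card ι * δ) ^ k := by
    intro k
    induction k with
    | zero => simpa using abs_one_apply_sub_inv_card_le
    | succ k ih =>
      intro i j
      rw [pow_succ', pow_succ']
      exact abs_mul_apply_sub_inv_card_le
        (mem_doublyStochastic_iff_mem_rowStochastic_and_mem_colStochastic.1 hQ).1 hδ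
        (mem_doublyStochastic_iff_mem_rowStochastic_and_mem_colStochastic.1 (pow_mem hQ k)).2
        ih i j
  have hr : 1 - Fintype.card ι * δ < 1 := by
    have : 0 < (Fintype.card ι : ℝ) * δ := mul_pos (by positivity) (hpos i₀ j₀)
    linarith
  obtain ⟨k, hk⟩ := exists_pow_lt_of_lt_one hε hr
  exact ⟨n₀ * k, fun i j => by rw [pow_mul]; exact (hcontract k i j).trans hk.le⟩

end Matrix

theorem sum_range_sum_range_add_le {f : ℕ → ℝ} {c : ℝ} {t m : ℕ} (ht : 1 ≤ t) (htm : t < m)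
    (hc : 0 ≤ c) (hf : ∀ n, t ≤ n → f n ≤ c) :
    ∑ i ∈ range (m + 1), ∑ j ∈ range (m + 1), f (i + j) ≤
      ∑ i ∈ range (t + 1), ∑ j ∈ range (t + 1), f (i + j) + 2 * m ^ 2 * c := by
  set S := range (m + 1) ×ˢ range (m + 1)
  set T := range (t + 1) ×ˢ range (t + 1)
  have hTS : T ⊆ S :=
    product_subset_product (range_subset_range.2 (by omega)) (range_subset_range.2 (by omega))
  have hcard : ((S \ T).card : ℝ) ≤ 2 * m ^ 2 := by
    have hsq : (t + 1) ^ 2 ≤ (m + 1) ^ 2 := by gcongr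
    rw [card_sdiff_of_subset hTS, card_product, card_product, card_range, card_range,
      ← sq, ← sq, Nat.cast_sub hsq]
    have ht' : (1 : ℝ) ≤ t := by exact_mod_cast ht
    push_cast
    nlinarith [sq_nonneg ((m : ℝ) - 1)]
  have hrest : ∑ p ∈ S \ T, f (p.1 + p.2) ≤ (S \ T).card * c := by
    rw [← nsmul_eq_mul]
    refine sum_le_card_nsmul _ _ c fun p hp => hf _ ?_
    simp only [S, T, mem_sdiff, mem_product, mem_range] at hp
    omega
  rw [← sum_product' (f := fun i j => f (i + j)), ← sum_product' (f := fun i j => f (i + j)),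
    ← sum_sdiff hTS]
  linarith [mul_le_mul_of_nonneg_right hcard hc]

namespace SimpleGraph

omit [Nonempty V]

variable (G : SimpleGraph V) [DecidableRel G.Adj]

theorem lazyStep_nonneg (x y : V) : 0 ≤ lazyStep G x y := by
  unfold lazyStep
  split_ifs <;> positivity

theorem lazyProb_nonneg (n : ℕ) (x y : V) : 0 ≤ lazyProb G n x y := by
  induction n generalizing x with
  | zero => unfold lazyProb; split_ifs <;> norm_num
  | succ n ih => exact sum_nonneg fun z _ => mul_nonneg (lazyStep_nonneg G x z) (ih z)

theorem lazyStep_mul_lazyProb_le (n : ℕ) (x z y : V) :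
    lazyStep G x z * lazyProb G n z y ≤ lazyProb G (n + 1) x y :=
  single_le_sum (f := fun z => lazyStep G x z * lazyProb G n z y)
    (fun z _ => mul_nonneg (lazyStep_nonneg G x z) (lazyProb_nonneg G n z y)) (mem_univ z)

theorem lazyProb_pos_of_walk {x y : V} (p : G.Walk x y) {n : ℕ} (hn : p.length ≤ n) :
    0 < lazyProb G n x y := by
  induction n generalizing x with
  | zero =>
    obtain rfl := p.eq_of_length_eq_zero (Nat.le_zero.1 hn)
    simp [lazyProb]
  | succ n ih =>
    cases p with
    | nil =>
      refine lt_of_lt_of_le ?_ (lazyStep_mul_lazyProb_le G n y y y)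
      exact mul_pos (by simp [lazyStep]) (ih .nil (Nat.zero_le n))
    | @cons _ z _ hadj p =>
      refine lt_of_lt_of_le ?_ (lazyStep_mul_lazyProb_le G n x z y)
      have hdeg : 0 < G.degree x := G.degree_pos_iff_exists_adj x |>.2 ⟨z, hadj⟩
      refine mul_pos ?_ (ih p (by simpa using hn))
      simp only [lazyStep, hadj.ne, hadj, if_false, if_true]
      positivity

theorem Connected.lazyProb_card_pos (hconn : G.Connected) (x y : V) :
    0 < lazyProb G (Fintype.card V) x y :=
  let p := (hconn x y).some.toPath
  lazyProb_pos_of_walk G p.1 p.2.length_lt.le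

theorem lazyProb_eq_pow_apply (n : ℕ) (x y : V) :
    lazyProb G n x y = (Matrix.of (lazyStep G) ^ n) x y := by
  induction n generalizing x with
  | zero => simp [lazyProb, one_apply]
  | succ n ih => simp [lazyProb, pow_succ', mul_apply, ih]

theorem sum_lazyStep {x : V} (hx : 0 < G.degree x) : ∑ y, lazyStep G x y = 1 := by
  have hstep : ∀ y, lazyStep G x y =
      (if x = y then 1 / 2 else 0) + if G.Adj x y then 1 / (2 * (G.degree x : ℝ)) else 0 := by
    intro y
    by_cases h : x = y
    · subst h; simp [lazyStep]
    · simp [lazyStep, h]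
  have hneighbors : (univ.filter (G.Adj x)).card = G.degree x := by
    rw [← card_neighborFinset_eq_degree, neighborFinset_eq_filter]
  simp only [hstep, sum_add_distrib, sum_ite_eq, mem_univ, if_true, sum_ite, sum_const_zero,
    add_zero, sum_const, hneighbors, nsmul_eq_mul]
  field_simp
  norm_num

namespace IsRegularOfDegree

variable {G} {d : ℕ}

theorem lazyStep_comm (hreg : G.IsRegularOfDegree d) (x y : V) :
    lazyStep G x y = lazyStep G y x := by
  by_cases h : x = y
  · rw [h]
  · simp [lazyStep, h, Ne.symm h, G.adj_comm, hreg.degree_eq]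

theorem lazyStep_mem_doublyStochastic (hreg : G.IsRegularOfDegree d) (hd : 0 < d) :
    Matrix.of (lazyStep G) ∈ doublyStochastic ℝ V := by
  have hrow : ∀ x, ∑ y, lazyStep G x y = 1 := fun x => G.sum_lazyStep (hreg.degree_eq x ▸ hd)
  refine mem_doublyStochastic_iff_sum.2 ⟨lazyStep_nonneg G, hrow, fun y => ?_⟩
  simpa [hreg.lazyStep_comm _ y] using hrow y

omit [DecidableEq V] in
theorem statDist_eq (hreg : G.IsRegularOfDegree d) (hd : 0 < d) (y : V) :
    statDist G y = (Fintype.card V : ℝ)⁻¹ := by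
  have hedges : (2 * #G.edgeFinset : ℝ) = Fintype.card V * d := by
    rw [← Nat.cast_ofNat, ← Nat.cast_mul, ← sum_degrees_eq_twice_card_edges]
    simp [hreg.degree_eq, mul_comm]
  rw [statDist, hreg.degree_eq, hedges]
  field_simp

omit [DecidableEq V] in
theorem pos_of_connected [Nontrivial V] (hreg : G.IsRegularOfDegree d) (hconn : G.Connected) :
    0 < d :=
  hreg.degree_eq (Classical.arbitrary V) ▸ hconn.preconnected.degree_pos_of_nontrivial _

theorem abs_lazyProb_div_statDist_sub_one_le_iff (hreg : G.IsRegularOfDegree d) (hd : 0 < d)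
    (n : ℕ) (x y : V) :
    |lazyProb G n x y / statDist G y - 1| ≤ 1 / 4 ↔
      |lazyProb G n x y - (Fintype.card V : ℝ)⁻¹| ≤ (4 * Fintype.card V : ℝ)⁻¹ := by
  have hN : (0 : ℝ) < Fintype.card V := Nat.cast_pos.2 (Fintype.card_pos_iff.2 ⟨x⟩)
  have hscale : lazyProb G n x y / (Fintype.card V : ℝ)⁻¹ - 1 =
      Fintype.card V * (lazyProb G n x y - (Fintype.card V : ℝ)⁻¹) := by
    field_simp
  rw [hreg.statDist_eq hd, hscale, abs_mul, abs_of_pos hN, mul_inv, ← le_div_iff₀' hN]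
  ring_nf

theorem abs_lazyProb_sub_le_of_tmix_le [Nontrivial V] (hreg : G.IsRegularOfDegree d)
    (hconn : G.Connected) {n : ℕ} (hn : tmix G ≤ n) (x y : V) :
    |lazyProb G n x y - (Fintype.card V : ℝ)⁻¹| ≤ (4 * Fintype.card V : ℝ)⁻¹ := by
  have hd := hreg.pos_of_connected hconn
  have hP := hreg.lazyStep_mem_doublyStochastic hd
  have hmixed : {n : ℕ | ∀ x y : V, |lazyProb G n x y / statDist G y - 1| ≤ 1 / 4}.Nonempty := by
    obtain ⟨k, hk⟩ := exists_pow_abs_apply_sub_inv_card_le hP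
      (fun x y => lazyProb_eq_pow_apply G _ x y ▸ hconn.lazyProb_card_pos G x y)
      (by positivity : (0 : ℝ) < (4 * Fintype.card V : ℝ)⁻¹)
    refine ⟨k, fun x y => ?_⟩
    rw [hreg.abs_lazyProb_div_statDist_sub_one_le_iff hd, lazyProb_eq_pow_apply]
    exact hk x y
  -- `tmix G` is an `sInf`: it satisfies the mixing condition only because the set is nonempty.
  have htmix := Nat.sInf_mem hmixed
  rw [lazyProb_eq_pow_apply]
  refine abs_pow_apply_sub_inv_card_le_of_le hP (fun x y => ?_) hn x y
  rw [← lazyProb_eq_pow_apply, ← hreg.abs_lazyProb_div_statDist_sub_one_le_iff hd]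
  exact htmix x y

theorem lazyProb_le_of_tmix_le [Nontrivial V] (hreg : G.IsRegularOfDegree d)
    (hconn : G.Connected) {n : ℕ} (hn : tmix G ≤ n) (x y : V) :
    lazyProb G n x y ≤ 5 / 4 * (Fintype.card V : ℝ)⁻¹ := by
  have h := (abs_le.1 (hreg.abs_lazyProb_sub_le_of_tmix_le hconn hn x y)).2
  rw [mul_inv] at h
  linarith

theorem one_le_tmix [Nontrivial V] (hreg : G.IsRegularOfDegree d) (hconn : G.Connected) :
    1 ≤ tmix G := by
  by_contra! h
  obtain ⟨x, y, hxy⟩ := exists_pair_ne V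
  have h0 := hreg.abs_lazyProb_sub_le_of_tmix_le hconn (Nat.lt_one_iff.1 h).le x y
  have hN : (0 : ℝ) < Fintype.card V := by positivity
  rw [lazyProb, if_neg hxy, zero_sub, abs_neg, abs_of_pos (inv_pos.2 hN),
    inv_le_inv₀ hN (by positivity)] at h0
  linarith

end IsRegularOfDegree

end SimpleGraph

/-- Upper bound on the doubly-indexed return quantity `H^W_ρ(m)`. -/
theorem HW_upper_bound
    (G : SimpleGraph V) [DecidableRel G.Adj] (hconn : G.Connected)
    (hcard : 2 ≤ Fintype.card V) (d : ℕ) (hreg : G.IsRegularOfDegree d)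
    (ρ : V) (m : ℕ) (hm : tmix G + 1 ≤ m) :
    HW G ρ m ≤ (⨆ ρ' : V, HW G ρ' (tmix G)) + (5 / 2) * (m : ℝ) ^ 2 / (Fintype.card V : ℝ) := by
  have : Nontrivial V := Fintype.one_lt_card_iff_nontrivial.1 hcard
  calc HW G ρ m ≤ HW G ρ (tmix G) + 2 * m ^ 2 * (5 / 4 * (Fintype.card V : ℝ)⁻¹) :=
        sum_range_sum_range_add_le (hreg.one_le_tmix hconn) hm (by positivity)
          fun n hn => hreg.lazyProb_le_of_tmix_le hconn hn ρ ρ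
    _ ≤ _ :=
        add_le_add (le_ciSup (f := fun ρ' => HW G ρ' (tmix G)) (Set.finite_range _).bddAbove ρ)
          (le_of_eq (by ring))
end
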